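/- Assume: for every θ ∈ Θ, the gradient ∇_h f_h(θ) exists and is continuous in h on H; the functions θ ↦ sup_{h∈H} f_h(θ) and θ ↦ sup_{h∈H} |g(θ) f_h(θ)| are measurable with ∫ sup_{h∈H} f_h dP < ∞ and ∫ sup_{h∈H} |g f_h| dP < ∞; and ∫ f_h dP > 0 for every h ∈ H. Then, almost surely, for all sufficiently large n the denominator ∑_{i=1}^n f_h(θ_i) is strictly positive for every h ∈ H, and sup_{h∈H} |Î_n(h) − I(h)| → 0 as n → ∞. -/

import Mathlib

open MeasureTheory ProbabilityTheory Filter Topology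

/-!
Regard `h ↦ f h θ` and `h ↦ g θ * f h θ` as random elements of the separable Banach space
`C(H, ℝ)`, where the sup-integrability hypotheses say exactly that they are Bochner integrable.
The strong law of large numbers in `C(H, ℝ)` then makes both empirical averages converge
uniformly in `h`. The limit `h ↦ ∫ f h ∂P` vanishes nowhere, so it is a unit of the Banach
algebra `C(H, ℝ)`; inversion is continuous at units, hence the ratio of averages converges
uniformly as well.
-/

namespace ContinuousMap

variable {K : Type*} [TopologicalSpace K]

theorem stronglyMeasurable_of_forall_measurable_eval [TopologicalSpace.SeparableSpace K]
    [CompactSpace K] [TopologicalSpace.MetrizableSpace K] {E : Type*} [NormedAddCommGroup E]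
    [CompleteSpace E] [SecondCountableTopology E] [MeasurableSpace E] [BorelSpace E]
    {α : Type*} [MeasurableSpace α] {F : α → C(K, E)} (hF : ∀ x, Measurable fun a => F a x) :
    StronglyMeasurable F := by
  borelize C(K, E)
  obtain ⟨s, hs_count, hs_dense⟩ := TopologicalSpace.exists_countable_dense K
  have : Countable s := hs_count.to_subtype
  -- `C(K, E)` is Polish, so restriction to the countable dense set `s` is a measurable embedding.
  have hrestrict : MeasurableEmbedding fun (c : C(K, E)) (x : s) => c x :=
    (continuous_pi fun x : s => continuous_eval_const (x : K)).measurableEmbedding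
      fun c c' h => coe_injective <|
        Continuous.ext_on hs_dense c.continuous c'.continuous fun x hx => congrFun h ⟨x, hx⟩
  exact (hrestrict.measurable_comp_iff.1 (measurable_pi_lambda _ fun x => hF x)).stronglyMeasurable

theorem eventually_forall_pos_of_tendsto [CompactSpace K] {ι : Type*} {l : Filter ι}
    {A : ι → C(K, ℝ)} {a : C(K, ℝ)} (hA : Tendsto A l (𝓝 a)) (ha : ∀ x, 0 < a x) :
    ∀ᶠ n in l, ∀ x, 0 < A n x := by
  filter_upwards [hA.eventually (eventually_mapsTo isCompact_univ isOpen_Ioi fun x _ => ha x)]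
    with n hn x using hn (Set.mem_univ x)

theorem ring_inverse_apply {M : Type*} [MonoidWithZero M] [TopologicalSpace M]
    [ContinuousMul M] {A : C(K, M)} (hA : IsUnit A) (x : K) :
    Ring.inverse A x = Ring.inverse (A x) := by
  obtain ⟨u, rfl⟩ := hA
  rw [Ring.inverse_unit, ← unitsLift_symm_apply_apply_inv', ← Ring.inverse_unit]
  rfl

theorem tendsto_iSup_abs_div_sub_div [CompactSpace K] {ι : Type*} {l : Filter ι}
    {A B : ι → C(K, ℝ)} {a b : C(K, ℝ)} (hA : Tendsto A l (𝓝 a)) (hB : Tendsto B l (𝓝 b))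
    (ha : ∀ x, a x ≠ 0) :
    Tendsto (fun n => ⨆ x, |B n x / A n x - b x / a x|) l (𝓝 0) := by
  have ha_unit : IsUnit a := (isUnit_iff_forall_ne_zero a).2 ha
  have hquot : Tendsto (fun n => B n * Ring.inverse (A n)) l (𝓝 (b * Ring.inverse a)) :=
    hB.mul ((NormedRing.inverse_continuousAt ha_unit.unit).tendsto.comp hA)
  have hA_unit : ∀ᶠ n in l, IsUnit (A n) := hA.eventually (Units.isOpen.mem_nhds ha_unit)
  refine (tendsto_iff_norm_sub_tendsto_zero.1 hquot).congr' ?_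
  filter_upwards [hA_unit] with n hn
  rw [norm_eq_iSup_norm]
  congr 1 with x
  simp [ring_inverse_apply hn, ring_inverse_apply ha_unit, div_eq_mul_inv]

theorem integrable_of_integrable_iSup_norm [CompactSpace K] {E : Type*} [NormedAddCommGroup E]
    {α : Type*} [MeasurableSpace α] {μ : Measure α} {F : α → C(K, E)}
    (hF : AEStronglyMeasurable F μ) (hsup : Integrable (fun a => ⨆ x, ‖F a x‖) μ) :
    Integrable F μ :=
  (integrable_norm_iff hF).1 <| hsup.congr <| ae_of_all _ fun a =>
    (norm_eq_iSup_norm (F a)).symm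

section Averages

variable [CompactSpace K] {u v : ℕ → C(K, ℝ)} {a b : C(K, ℝ)}

theorem eventually_forall_sum_pos
    (hu : Tendsto (fun n : ℕ => (n : ℝ)⁻¹ • ∑ i ∈ Finset.range n, u i) atTop (𝓝 a))
    (ha : ∀ x, 0 < a x) :
    ∀ᶠ n in atTop, ∀ x, 0 < ∑ i ∈ Finset.range n, u i x := by
  filter_upwards [eventually_forall_pos_of_tendsto hu ha] with n hn x
  exact pos_of_mul_pos_right (by simpa using hn x) (by positivity)

theorem tendsto_iSup_abs_sum_div_sum_sub_div
    (hu : Tendsto (fun n : ℕ => (n : ℝ)⁻¹ • ∑ i ∈ Finset.range n, u i) atTop (𝓝 a))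
    (hv : Tendsto (fun n : ℕ => (n : ℝ)⁻¹ • ∑ i ∈ Finset.range n, v i) atTop (𝓝 b))
    (ha : ∀ x, a x ≠ 0) :
    Tendsto (fun n => ⨆ x, |(∑ i ∈ Finset.range n, v i x) / (∑ i ∈ Finset.range n, u i x)
      - b x / a x|) atTop (𝓝 0) := by
  refine (tendsto_iSup_abs_div_sub_div hu hv ha).congr' ?_
  filter_upwards [eventually_ne_atTop 0] with n hn
  congr with x
  simp only [coe_smul, coe_sum, Pi.smul_apply, Finset.sum_apply, smul_eq_mul]
  rw [mul_div_mul_left _ _ (by positivity)]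

end Averages

end ContinuousMap

theorem ProbabilityTheory.strong_law_ae_comp {Ω Θ E : Type*} [MeasurableSpace Ω]
    [MeasurableSpace Θ] [NormedAddCommGroup E] [NormedSpace ℝ E] [CompleteSpace E]
    {μ : Measure Ω} {P : Measure Θ} {X : ℕ → Ω → Θ} (hX_meas : ∀ i, Measurable (X i))
    (hX_indep : Pairwise (Function.onFun (IndepFun · · μ) X)) (hX_law : ∀ i, μ.map (X i) = P)
    {F : Θ → E} (hF_meas : StronglyMeasurable F) (hF_int : Integrable F P) :
    ∀ᵐ ω ∂μ, Tendsto (fun n : ℕ => (n : ℝ)⁻¹ • ∑ i ∈ Finset.range n, F (X i ω)) atTop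
      (𝓝 (∫ θ, F θ ∂P)) := by
  borelize E
  have hident : ∀ i, IdentDistrib (X i) (X 0) μ μ := fun i =>
    ⟨(hX_meas i).aemeasurable, (hX_meas 0).aemeasurable, by rw [hX_law i, hX_law 0]⟩
  have hlaw : MeasurePreserving (X 0) μ P := ⟨hX_meas 0, hX_law 0⟩
  have hmean : ∫ ω, F (X 0 ω) ∂μ = ∫ θ, F θ ∂P := by
    rw [← hX_law 0, integral_map (hX_meas 0).aemeasurable hF_meas.aestronglyMeasurable]
  have := strong_law_ae (fun i => F ∘ X i)
    ((hlaw.integrable_comp hF_meas.aestronglyMeasurable).2 hF_int)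
    (fun i j hij => (hX_indep hij).comp hF_meas.measurable hF_meas.measurable)
    (fun i => (hident i).comp hF_meas.measurable)
  simpa [hmean] using this

theorem stmt9_general {d k : ℕ}
    (Θ : Set (EuclideanSpace ℝ (Fin d)))
    (P : Measure Θ)
    (H : Set (EuclideanSpace ℝ (Fin k))) (hH : IsCompact H)
    (f : EuclideanSpace ℝ (Fin k) → Θ → ℝ)
    (hf_meas : ∀ h ∈ H, Measurable (f h))
    (hf_nonneg : ∀ h θ, 0 ≤ f h θ)
    (g : Θ → ℝ) (hg_meas : Measurable g)
    (hgrad : ∀ θ, (∀ h ∈ H, DifferentiableAt ℝ (fun h' => f h' θ) h) ∧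
      ContinuousOn (fun h => gradient (fun h' => f h' θ) h) H)
    (hsupf_int : Integrable (fun θ => ⨆ h : H, f (h : EuclideanSpace ℝ (Fin k)) θ) P)
    (hsupgf_int : Integrable (fun θ => ⨆ h : H, |g θ * f (h : EuclideanSpace ℝ (Fin k)) θ|) P)
    (hpos : ∀ h ∈ H, 0 < ∫ θ, f h θ ∂P)
    {Ω : Type*} [MeasurableSpace Ω] (μ : Measure Ω)
    (X : ℕ → Ω → Θ) (hX_meas : ∀ i, Measurable (X i))
    (hX_indep : iIndepFun X μ)
    (hX_law : ∀ i, Measure.map (X i) μ = P) :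
    ∀ᵐ ω ∂μ,
      (∀ᶠ n : ℕ in atTop, ∀ h ∈ H, 0 < ∑ i ∈ Finset.range n, f h (X i ω)) ∧
      Tendsto (fun n : ℕ =>
          ⨆ h : H, |(∑ i ∈ Finset.range n, g (X i ω) * f (h : EuclideanSpace ℝ (Fin k)) (X i ω))
              / (∑ i ∈ Finset.range n, f (h : EuclideanSpace ℝ (Fin k)) (X i ω))
            - (∫ θ, g θ * f (h : EuclideanSpace ℝ (Fin k)) θ ∂P)
              / (∫ θ, f (h : EuclideanSpace ℝ (Fin k)) θ ∂P)|)
        atTop (𝓝 0) := by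
  have : CompactSpace H := isCompact_iff_compactSpace.mp hH
  let F : Θ → C(H, ℝ) := fun θ =>
    ⟨fun h => f h θ, (DifferentiableOn.continuousOn fun h hh =>
      ((hgrad θ).1 h hh).differentiableWithinAt).domRestrict⟩
  let G : Θ → C(H, ℝ) := fun θ => g θ • F θ
  have hF_apply : ∀ θ (h : H), F θ h = f h θ := fun _ _ => rfl
  have hG_apply : ∀ θ (h : H), G θ h = g θ * f h θ := fun _ _ => rfl
  have hF_meas : StronglyMeasurable F :=
    ContinuousMap.stronglyMeasurable_of_forall_measurable_eval fun h => hf_meas h h.2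
  have hG_meas : StronglyMeasurable G :=
    ContinuousMap.stronglyMeasurable_of_forall_measurable_eval fun h =>
      hg_meas.mul (hf_meas h h.2)
  have hF_int : Integrable F P :=
    ContinuousMap.integrable_of_integrable_iSup_norm hF_meas.aestronglyMeasurable <|
      hsupf_int.congr <| ae_of_all _ fun θ => by simp [hF_apply, abs_of_nonneg (hf_nonneg _ θ)]
  have hG_int : Integrable G P :=
    ContinuousMap.integrable_of_integrable_iSup_norm hG_meas.aestronglyMeasurable <|
      hsupgf_int.congr <| ae_of_all _ fun θ => by simp [hG_apply]
  have ha : ∀ h : H, 0 < (∫ θ, F θ ∂P) h := fun h => by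
    rw [ContinuousMap.integral_apply hF_int]
    exact hpos h h.2
  have hindep : Pairwise (Function.onFun (IndepFun · · μ) X) := fun _ _ => hX_indep.indepFun
  filter_upwards [strong_law_ae_comp hX_meas hindep hX_law hF_meas hF_int,
    strong_law_ae_comp hX_meas hindep hX_law hG_meas hG_int] with ω hA hB
  refine ⟨?_, ?_⟩
  · filter_upwards [ContinuousMap.eventually_forall_sum_pos hA ha] with n hn h hh
    simpa [hF_apply] using hn ⟨h, hh⟩
  · simpa [hF_apply, hG_apply, ContinuousMap.integral_apply hF_int,
      ContinuousMap.integral_apply hG_int] using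
      ContinuousMap.tendsto_iSup_abs_sum_div_sum_sub_div hA hB fun h => (ha h).ne'

/-- uniform consistency of the weighted-average estimator of posterior
expectations, iid case.  Under gradient-continuity of `f`, integrability of
`sup_h f_h` and `sup_h |g f_h|`, and positivity of `∫ f_h dP` for all `h ∈ H`:  almost surely,
eventually in `n` the denominator `∑_{i≤n} f_h(θ_i)` is positive for every `h ∈ H`, and
`sup_{h ∈ H} |Îₙ(h) − I(h)| → 0`. -/
theorem stmt9 {d k : ℕ}
    (Θ : Set (EuclideanSpace ℝ (Fin d))) (hΘ : MeasurableSet Θ)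
    (P : Measure Θ) [IsProbabilityMeasure P]
    (H : Set (EuclideanSpace ℝ (Fin k))) (hH : IsCompact H)
    (f : EuclideanSpace ℝ (Fin k) → Θ → ℝ)
    (hf_meas : ∀ h ∈ H, Measurable (f h))
    (hf_nonneg : ∀ h θ, 0 ≤ f h θ)
    (g : Θ → ℝ) (hg_meas : Measurable g)
    (hgrad : ∀ θ, (∀ h ∈ H, DifferentiableAt ℝ (fun h' => f h' θ) h) ∧
      ContinuousOn (fun h => gradient (fun h' => f h' θ) h) H)
    (hsupf_meas : Measurable (fun θ => ⨆ h : H, f (h : EuclideanSpace ℝ (Fin k)) θ))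
    (hsupf_int : Integrable (fun θ => ⨆ h : H, f (h : EuclideanSpace ℝ (Fin k)) θ) P)
    (hsupgf_meas : Measurable (fun θ => ⨆ h : H, |g θ * f (h : EuclideanSpace ℝ (Fin k)) θ|))
    (hsupgf_int : Integrable (fun θ => ⨆ h : H, |g θ * f (h : EuclideanSpace ℝ (Fin k)) θ|) P)
    (hpos : ∀ h ∈ H, 0 < ∫ θ, f h θ ∂P)
    {Ω : Type*} [MeasurableSpace Ω] (μ : Measure Ω) [IsProbabilityMeasure μ]
    (X : ℕ → Ω → Θ) (hX_meas : ∀ i, Measurable (X i))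
    (hX_indep : iIndepFun X μ)
    (hX_law : ∀ i, Measure.map (X i) μ = P) :
    ∀ᵐ ω ∂μ,
      (∀ᶠ n : ℕ in atTop, ∀ h ∈ H, 0 < ∑ i ∈ Finset.range n, f h (X i ω)) ∧
      Tendsto (fun n : ℕ =>
          ⨆ h : H, |(∑ i ∈ Finset.range n, g (X i ω) * f (h : EuclideanSpace ℝ (Fin k)) (X i ω))
              / (∑ i ∈ Finset.range n, f (h : EuclideanSpace ℝ (Fin k)) (X i ω))
            - (∫ θ, g θ * f (h : EuclideanSpace ℝ (Fin k)) θ ∂P)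
              / (∫ θ, f (h : EuclideanSpace ℝ (Fin k)) θ ∂P)|)
        atTop (𝓝 0) :=
  stmt9_general Θ P H hH f hf_meas hf_nonneg g hg_meas hgrad hsupf_int hsupgf_int hpos μ X hX_meas
    hX_indep hX_law
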